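/- There exists a nonnegative real sequence {b_n}_{n≥1} which is an almost monotonic sequence (AMS), satisfies lim_{n→∞} n·b_n = 0, and yet the sine series ∑_{n=1}^∞ b_n sin(nx) does not converge uniformly on ℝ (i.e., its partial sums S_n(x) = ∑_{k=1}^n b_k sin(kx) do not converge uniformly). -/

import Mathlib

/-!
Take `bₖ = eₖ` for `k ≡ 1 (mod 4)` and `bₖ = eₖ / 2` otherwise, where `e` is nonincreasing
with `n eₙ → 0` but `∑ eₙ = ∞`. Then `b` is almost monotonic with constant `2`, but at
`x = π / 2` the block `4m, …, 4m + 3` of the sine series contributes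
`b(4m+1) - b(4m+3) ≥ e(4m+1) / 2`, so the series diverges there, let alone converges uniformly.
-/

open Filter Finset Real

theorem Finset.sum_Icc_one_eq_sum_range {M : Type*} [AddCommMonoid M] {f : ℕ → M} (h0 : f 0 = 0)
    (n : ℕ) : ∑ k ∈ Icc 1 n, f k = ∑ k ∈ range (n + 1), f k := by
  rw [range_eq_Ico, sum_eq_sum_Ico_succ_bot n.succ_pos, h0, zero_add]
  rfl

theorem Finset.sum_range_mul_eq_sum_sum {M : Type*} [AddCommMonoid M] (f : ℕ → M) (q n : ℕ) :
    ∑ k ∈ range (q * n), f k = ∑ m ∈ range n, ∑ i ∈ range q, f (q * m + i) := by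
  induction n with
  | zero => simp
  | succ n ih => rw [Nat.mul_succ, sum_range_add, ih, sum_range_succ]

theorem sum_range_four_mul_sin_nat_mul_pi_div_two (b : ℕ → ℝ) (M : ℕ) :
    ∑ k ∈ range (4 * M), b k * sin (k * (π / 2)) =
      ∑ m ∈ range M, (b (4 * m + 1) - b (4 * m + 3)) := by
  rw [sum_range_mul_eq_sum_sum]
  refine sum_congr rfl fun m _ => ?_
  have hsin (i : ℕ) : sin (↑(4 * m + i) * (π / 2)) = sin (i * (π / 2)) := by
    rw [← sin_add_nat_mul_two_pi (i * (π / 2)) m]; congr 1; push_cast; ring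
  have h2 : sin (2 * (π / 2)) = 0 := by rw [mul_div_cancel₀ _ two_ne_zero, sin_pi]
  have h3 : sin (3 * (π / 2)) = -1 := by
    rw [show 3 * (π / 2) = π / 2 + π by ring, sin_add_pi, sin_pi_div_two]
  simp only [sum_range_succ, sum_range_zero, hsin]
  push_cast
  simp [h2, h3, sub_eq_add_neg]

/-- A dyadic step version of `1 / (n log n)`. -/
noncomputable def dyadicEnvelope (n : ℕ) : ℝ := 1 / (2 ^ Nat.log 2 n * (Nat.log 2 n + 1))

theorem dyadicEnvelope_pos (n : ℕ) : 0 < dyadicEnvelope n := by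
  unfold dyadicEnvelope; positivity

theorem antitone_dyadicEnvelope : Antitone dyadicEnvelope := by
  intro m n hmn
  have hlog : Nat.log 2 m ≤ Nat.log 2 n := Nat.log_monotone hmn
  unfold dyadicEnvelope
  gcongr
  norm_num

theorem tendsto_nat_mul_dyadicEnvelope :
    Tendsto (fun n : ℕ => (n : ℝ) * dyadicEnvelope n) atTop (nhds 0) := by
  have hlog : Tendsto (fun n : ℕ => ((Nat.log 2 n : ℕ) : ℝ)) atTop atTop :=
    tendsto_natCast_atTop_atTop.comp <|
      Nat.log_monotone.tendsto_atTop_atTop fun j => ⟨2 ^ j, (Nat.log_pow one_lt_two j).ge⟩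
  have hbound : Tendsto (fun n : ℕ => 2 / ((Nat.log 2 n : ℝ) + 1)) atTop (nhds 0) :=
    tendsto_const_nhds.div_atTop (tendsto_atTop_add_const_right _ 1 hlog)
  refine squeeze_zero (fun n => by have := dyadicEnvelope_pos n; positivity) (fun n => ?_) hbound
  have hn : (n : ℝ) ≤ 2 ^ (Nat.log 2 n + 1) := by
    exact_mod_cast (Nat.lt_pow_succ_log_self one_lt_two n).le
  calc (n : ℝ) * dyadicEnvelope n ≤ 2 ^ (Nat.log 2 n + 1) * dyadicEnvelope n :=
        mul_le_mul_of_nonneg_right hn (dyadicEnvelope_pos n).le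
    _ = 2 / ((Nat.log 2 n : ℝ) + 1) := by unfold dyadicEnvelope; field_simp; ring

theorem not_summable_dyadicEnvelope : ¬ Summable dyadicEnvelope := by
  rw [← summable_condensed_iff_of_nonneg (fun n => (dyadicEnvelope_pos n).le)
    fun m n _ h => antitone_dyadicEnvelope h]
  have hcond (k : ℕ) : (2 : ℝ) ^ k * dyadicEnvelope (2 ^ k) = 1 / ((k + 1 : ℕ) : ℝ) := by
    unfold dyadicEnvelope
    rw [Nat.log_pow one_lt_two]
    push_cast
    field_simp
  rw [funext hcond]
  exact mt (summable_nat_add_iff (f := fun n : ℕ => 1 / (n : ℝ)) 1).1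
    not_summable_one_div_natCast

noncomputable def sineCoeff (k : ℕ) : ℝ := dyadicEnvelope k * if k % 4 = 1 then 1 else 1 / 2

theorem half_dyadicEnvelope_le_sineCoeff (k : ℕ) : dyadicEnvelope k / 2 ≤ sineCoeff k := by
  have := dyadicEnvelope_pos k
  unfold sineCoeff; split_ifs <;> linarith

theorem sineCoeff_le_dyadicEnvelope (k : ℕ) : sineCoeff k ≤ dyadicEnvelope k := by
  have := dyadicEnvelope_pos k
  unfold sineCoeff; split_ifs <;> linarith

theorem sineCoeff_nonneg (k : ℕ) : 0 ≤ sineCoeff k :=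
  (div_nonneg (dyadicEnvelope_pos k).le two_pos.le).trans (half_dyadicEnvelope_le_sineCoeff k)

theorem sineCoeff_le_two_mul {n k : ℕ} (h : n ≤ k) : sineCoeff k ≤ 2 * sineCoeff n := by
  have := half_dyadicEnvelope_le_sineCoeff n
  linarith [sineCoeff_le_dyadicEnvelope k, antitone_dyadicEnvelope h]

theorem tendsto_nat_mul_sineCoeff :
    Tendsto (fun n : ℕ => (n : ℝ) * sineCoeff n) atTop (nhds 0) :=
  squeeze_zero (fun n => mul_nonneg n.cast_nonneg (sineCoeff_nonneg n))
    (fun n => mul_le_mul_of_nonneg_left (sineCoeff_le_dyadicEnvelope n) n.cast_nonneg)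
    tendsto_nat_mul_dyadicEnvelope

theorem sum_range_dyadicEnvelope_le_sineCoeff_sub (m : ℕ) :
    (∑ i ∈ range 4, dyadicEnvelope (4 * m + i + 1)) / 8 ≤
      sineCoeff (4 * m + 1) - sineCoeff (4 * m + 3) := by
  have hmod1 : (4 * m + 1) % 4 = 1 := by omega
  have hmod3 : (4 * m + 3) % 4 ≠ 1 := by omega
  have hanti (i : ℕ) : dyadicEnvelope (4 * m + i + 1) ≤ dyadicEnvelope (4 * m + 1) :=
    antitone_dyadicEnvelope (by omega)
  simp only [sineCoeff, hmod1, hmod3, if_true, if_false, sum_range_succ, sum_range_zero]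
  linarith [hanti 0, hanti 1, hanti 2, hanti 3]

theorem tendsto_sum_range_four_mul_sineCoeff_mul_sin_pi_div_two :
    Tendsto (fun M => ∑ k ∈ range (4 * M), sineCoeff k * sin (k * (π / 2))) atTop atTop := by
  have hdiv : Tendsto (fun n => ∑ k ∈ range n, dyadicEnvelope (k + 1)) atTop atTop :=
    (not_summable_iff_tendsto_nat_atTop_of_nonneg fun k => (dyadicEnvelope_pos _).le).1
      (mt (summable_nat_add_iff 1).1 not_summable_dyadicEnvelope)
  refine tendsto_atTop_mono (fun M => ?_)
    ((hdiv.comp (tendsto_id.const_mul_atTop' four_pos)).atTop_div_const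
      (by norm_num : (0 : ℝ) < 8))
  simp only [Function.comp_apply]
  rw [sum_range_four_mul_sin_nat_mul_pi_div_two, sum_range_mul_eq_sum_sum, sum_div]
  exact sum_le_sum fun m _ => sum_range_dyadicEnvelope_le_sineCoeff_sub m

theorem not_tendsto_sum_range_sineCoeff_mul_sin_pi_div_two (L : ℝ) :
    ¬ Tendsto (fun n => ∑ k ∈ range n, sineCoeff k * sin (k * (π / 2))) atTop (nhds L) :=
  fun h =>
    not_tendsto_nhds_of_tendsto_atTop tendsto_sum_range_four_mul_sineCoeff_mul_sin_pi_div_two _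
      (h.comp (tendsto_id.const_mul_atTop' four_pos))

theorem stmt0 :
    ∃ b : ℕ → ℝ,
      (∀ n : ℕ, 1 ≤ n → 0 ≤ b n) ∧
      (∃ C : ℝ, 0 < C ∧ ∀ n k : ℕ, 1 ≤ n → n ≤ k → b k ≤ C * b n) ∧
      Tendsto (fun n : ℕ => (n : ℝ) * b n) atTop (nhds 0) ∧
      ¬ ∃ f : ℝ → ℝ,
        TendstoUniformly
          (fun (n : ℕ) (x : ℝ) => ∑ k ∈ Finset.Icc 1 n, b k * Real.sin (k * x))
          f atTop := by
  refine ⟨sineCoeff, fun n _ => sineCoeff_nonneg n,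
    ⟨2, two_pos, fun n k _ h => sineCoeff_le_two_mul h⟩, tendsto_nat_mul_sineCoeff, ?_⟩
  rintro ⟨f, hf⟩
  refine not_tendsto_sum_range_sineCoeff_mul_sin_pi_div_two (f (π / 2))
    ((tendsto_add_atTop_iff_nat 1).1 ?_)
  simpa only [← sum_Icc_one_eq_sum_range (f := fun k : ℕ => sineCoeff k * sin (k * (π / 2)))
    (by simp)] using hf.tendsto_at (π / 2)
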